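/- arXiv:2310.01513 — 2 statements merged into one kernel-verified Lean document; each statement's English description precedes it below -/
import Mathlib

section
/- Let X be a partial groupoid. For each x ∈ X_n with matrix form (x_{ij}) and each arbitrary function φ : [m] → [n], there is a unique element φ^*x ∈ X_m whose matrix form is (x_{φ(k),φ(ℓ)})_{0 ≤ k,ℓ ≤ m}; these assignments define a symmetric set Z with Z_n = X_n whose restriction along J : Δ → Υ equals X. -/
/-!
Matrix forms are `ν`-symmetric and, by edginess, determine simplices, so `φ^* x` is unique and
`φ ↦ φ^*` is functorial as soon as it exists. Order-preserving maps act through `X`. Using the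
unit laws for degenerate edges, `L x` has matrix form `(x_{χ i, χ j})` for the fold map
`χ_n : [2n] → [n]`. Composing `χ_m` with order-preserving maps `[m] → [2m]` gives the prefix
reversals `r_j` of `[m]`, and these generate all permutations, since the adjacent transposition
`(k, k + 1)` is `r_{k+1} r_1 r_{k+1}`. Finally every map is an order-preserving map after a
permutation.
-/

/-- A (skeletal) simplicial set: a contravariant functor on the simplex category,
with `obj n` the set of `n`-simplices and `map α` the action of an
order-preserving map `α : [m] → [n]`. -/
structure SSet' where
  obj : ℕ → Type
  map : ∀ {m n : ℕ}, (Fin (m + 1) →o Fin (n + 1)) → obj n → obj m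
  map_id : ∀ (n : ℕ) (x : obj n), map OrderHom.id x = x
  map_comp : ∀ {k m n : ℕ} (α : Fin (k + 1) →o Fin (m + 1)) (β : Fin (m + 1) →o Fin (n + 1))
      (x : obj n), map (β.comp α) x = map α (map β x)

/-- The order-preserving map `ρ_{ij} : [1] → [n]`, `0 ↦ i`, `1 ↦ j` (for `i ≤ j`). -/
def rho {n : ℕ} (i j : Fin (n + 1)) (h : i ≤ j) : Fin 2 →o Fin (n + 1) where
  toFun := ![i, j]
  monotone' := by
    intro a b hab
    fin_cases a <;> fin_cases b <;> simp_all

/-- The `k`-th edge `ρ_{k,k+1}^*(x)` of an `n`-simplex. -/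
def SSet'.edge (X : SSet') {n : ℕ} (x : X.obj n) (k : Fin n) : X.obj 1 :=
  X.map (rho k.castSucc k.succ (Fin.castSucc_lt_succ (i := k)).le) x

/-- A simplicial set is edgy if each simplex is determined by its string of edges. -/
def SSet'.IsEdgy (X : SSet') : Prop :=
  ∀ n : ℕ, 1 ≤ n → Function.Injective fun (x : X.obj n) (k : Fin n) => X.edge x k

/-- Conjugation of an order-preserving map by the flips `τ`. -/
def conj {m n : ℕ} (α : Fin (m + 1) →o Fin (n + 1)) : Fin (m + 1) →o Fin (n + 1) where
  toFun k := (α k.rev).rev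
  monotone' := by
    intro a b hab
    exact Fin.rev_le_rev.mpr (α.monotone (Fin.rev_le_rev.mpr hab))

/-- An anti-involution on a simplicial set `X`, i.e. a simplicial map
`ν : X^op → X` with `ν^op ∘ ν = id`, described levelwise.  Naturality of
`ν : X^op → X` amounts to `ν (X(τ∘α∘τ) x) = X(α) (ν x)`. -/
structure AntiInvolution (X : SSet') where
  app : ∀ n : ℕ, X.obj n → X.obj n
  naturality : ∀ {m n : ℕ} (α : Fin (m + 1) →o Fin (n + 1)) (x : X.obj n),
    app m (X.map (conj α) x) = X.map α (app n x)
  involutive : ∀ (n : ℕ) (x : X.obj n), app n (app n x) = x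

/-- The constant map `[1] → [n]` at the last vertex, i.e. `s_0 ∘ (d_0)^n`. -/
def lastConst (n : ℕ) : Fin 2 →o Fin (n + 1) := ⟨fun _ => Fin.last n, monotone_const⟩

/-- `LSpec X ν x y` says that `y ∈ X_{2n}` has the edge string
`[f_n† | ⋯ | f_1† | f_1 | ⋯ | f_n]`, where `[f_1 | ⋯ | f_n]` is the edge string of
`x ∈ X_n`, and that the total composite `ρ_{0,2n}^*(y)` is the identity
`s_0(d_0^n x)` on the last vertex of `x`. -/
def LSpec (X : SSet') (ν : AntiInvolution X) {n : ℕ} (x : X.obj n) (y : X.obj (n + n)) : Prop :=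
  (∀ k : Fin (n + n), X.edge y k =
      if h : (k : ℕ) < n then ν.app 1 (X.edge x ⟨n - 1 - (k : ℕ), by omega⟩)
      else X.edge x ⟨(k : ℕ) - n, by have := k.isLt; omega⟩) ∧
  X.map (rho 0 (Fin.last (n + n)) (Fin.zero_le _)) y = X.map (lastConst n) x

/-- A partial groupoid structure on a simplicial set: it is edgy, has an
anti-involution which is the identity on vertices, and has operators
`L : X_n → X_{2n}` with `L[f_1|⋯|f_n] = [f_n†|⋯|f_1†|f_1|⋯|f_n]` whose total
composite is an identity. -/
structure PartialGroupoidStruct (X : SSet') where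
  edgy : X.IsEdgy
  inv : AntiInvolution X
  inv_zero : ∀ x : X.obj 0, inv.app 0 x = x
  L : ∀ {n : ℕ}, X.obj n → X.obj (n + n)
  L_spec : ∀ {n : ℕ}, 1 ≤ n → ∀ x : X.obj n, LSpec X inv x (L x)

/-- The Prop-valued version: `X` together with the anti-involution `ν` is a
partial groupoid. -/
def IsPartialGroupoid (X : SSet') (ν : AntiInvolution X) : Prop :=
  X.IsEdgy ∧ (∀ v : X.obj 0, ν.app 0 v = v) ∧
    ∀ n : ℕ, 1 ≤ n → ∀ x : X.obj n, ∃ y : X.obj (n + n), LSpec X ν x y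

/-- The matrix form of an `n`-simplex: `x_{ij} = ρ_{ij}^*(x)` for `i ≤ j`, and
`x_{ji} = (x_{ij})†`. -/
def matrixForm (X : SSet') (ν : AntiInvolution X) {n : ℕ} (x : X.obj n) (i j : Fin (n + 1)) :
    X.obj 1 :=
  if h : i ≤ j then X.map (rho i j h) x
  else ν.app 1 (X.map (rho j i (le_of_not_ge h)) x)

/-- The fold map `χ_n : [2n] → [n]`, `i ↦ |n - i|`. -/
def chi (n : ℕ) (i : Fin (n + n + 1)) : Fin (n + 1) :=
  ⟨max n (i : ℕ) - min n (i : ℕ), by have := i.isLt; omega⟩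

/-- A map of simplicial sets. -/
structure SSetHom (X Y : SSet') where
  app : ∀ n : ℕ, X.obj n → Y.obj n
  naturality : ∀ {m n : ℕ} (α : Fin (m + 1) →o Fin (n + 1)) (x : X.obj n),
    app m (X.map α x) = Y.map α (app n x)

section MatrixForm

variable {X : SSet'} (ν : AntiInvolution X)

lemma comp_rho {m n : ℕ} (β : Fin (m + 1) →o Fin (n + 1)) (i j : Fin (m + 1)) (h : i ≤ j) :
    β.comp (rho i j h) = rho (β i) (β j) (β.monotone h) := by
  ext t
  fin_cases t <;> rfl

lemma conj_rho {n : ℕ} (i j : Fin (n + 1)) (h : i ≤ j) :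
    conj (rho i j h) = rho j.rev i.rev (Fin.rev_le_rev.mpr h) := by
  ext t
  fin_cases t <;> rfl

lemma matrixForm_of_le {n : ℕ} (x : X.obj n) {i j : Fin (n + 1)} (h : i ≤ j) :
    matrixForm X ν x i j = X.map (rho i j h) x :=
  dif_pos h

lemma edge_eq_matrixForm {n : ℕ} (x : X.obj n) (k : Fin n) :
    X.edge x k = matrixForm X ν x k.castSucc k.succ :=
  (matrixForm_of_le ν x _).symm

/-- A degenerate edge factors through `X_0`, where `ν` is the identity. -/
lemma app_one_matrixForm_self (hν : ∀ v : X.obj 0, ν.app 0 v = v) {n : ℕ} (x : X.obj n)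
    (i : Fin (n + 1)) : ν.app 1 (matrixForm X ν x i i) = matrixForm X ν x i i := by
  let c : Fin 2 →o Fin 1 := ⟨fun _ => 0, monotone_const⟩
  have hfac : rho i i le_rfl = (⟨fun _ => i, monotone_const⟩ : Fin 1 →o Fin (n + 1)).comp c := by
    ext t
    fin_cases t <;> rfl
  have hnat := ν.naturality c (X.map ⟨fun _ => i, monotone_const⟩ x)
  rw [show conj c = c from rfl, hν] at hnat
  rw [matrixForm_of_le ν x le_rfl, hfac, X.map_comp, hnat]

lemma app_one_matrixForm (hν : ∀ v : X.obj 0, ν.app 0 v = v) {n : ℕ} (x : X.obj n)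
    (i j : Fin (n + 1)) : ν.app 1 (matrixForm X ν x i j) = matrixForm X ν x j i := by
  rcases lt_trichotomy i j with h | rfl | h
  · rw [matrixForm_of_le ν x h.le, matrixForm, dif_neg (not_le.mpr h)]
  · exact app_one_matrixForm_self ν hν x i
  · rw [matrixForm, dif_neg (not_le.mpr h), ν.involutive, matrixForm_of_le ν x h.le]

lemma matrixForm_eq_of_forall_le (hν : ∀ v : X.obj 0, ν.app 0 v = v) {m n : ℕ} (y : X.obj m)
    (x : X.obj n) (φ : Fin (m + 1) → Fin (n + 1))
    (h : ∀ k l, k ≤ l → matrixForm X ν y k l = matrixForm X ν x (φ k) (φ l)) (k l : Fin (m + 1)) :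
    matrixForm X ν y k l = matrixForm X ν x (φ k) (φ l) := by
  rcases le_total k l with hkl | hlk
  · exact h k l hkl
  · rw [← app_one_matrixForm ν hν y l k, h l k hlk, app_one_matrixForm ν hν]

lemma matrixForm_map (hν : ∀ v : X.obj 0, ν.app 0 v = v) {m n : ℕ}
    (α : Fin (m + 1) →o Fin (n + 1)) (x : X.obj n) (k l : Fin (m + 1)) :
    matrixForm X ν (X.map α x) k l = matrixForm X ν x (α k) (α l) :=
  matrixForm_eq_of_forall_le ν hν _ x α (fun k l h => by
    rw [matrixForm_of_le ν _ h, matrixForm_of_le ν x (α.monotone h), ← X.map_comp, comp_rho]) k l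

lemma matrixForm_app (hν : ∀ v : X.obj 0, ν.app 0 v = v) {n : ℕ} (x : X.obj n)
    (k l : Fin (n + 1)) : matrixForm X ν (ν.app n x) k l = matrixForm X ν x k.rev l.rev :=
  matrixForm_eq_of_forall_le ν hν _ x Fin.rev (fun k l h => by
    rw [matrixForm_of_le ν _ h, ← ν.naturality, conj_rho,
      ← matrixForm_of_le ν x (Fin.rev_le_rev.mpr h), app_one_matrixForm ν hν]) k l

end MatrixForm

def rho₃ {n : ℕ} (i j k : Fin (n + 1)) (hij : i ≤ j) (hjk : j ≤ k) : Fin 3 →o Fin (n + 1) where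
  toFun := ![i, j, k]
  monotone' := by
    intro a b hab
    fin_cases a <;> fin_cases b <;> simp_all [hij.trans hjk]

section Edgy

variable {X : SSet'} (ν : AntiInvolution X) (hν : ∀ v : X.obj 0, ν.app 0 v = v) (hX : X.IsEdgy)
include hX

lemma eq_of_matrixForm_succ {m : ℕ} (hm : 1 ≤ m) {y z : X.obj m}
    (h : ∀ k : Fin m, matrixForm X ν y k.castSucc k.succ = matrixForm X ν z k.castSucc k.succ) :
    y = z :=
  hX m hm (funext fun k => by simpa only [edge_eq_matrixForm ν] using h k)

/-- A `0`-simplex is a face of its degenerate edge, which is its only matrix entry. -/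
lemma eq_of_matrixForm {m : ℕ} {y z : X.obj m}
    (h : ∀ k l, matrixForm X ν y k l = matrixForm X ν z k l) : y = z := by
  rcases Nat.eq_zero_or_pos m with rfl | hm
  · have hs : (rho (0 : Fin 1) 0 le_rfl).comp (⟨fun _ => 0, monotone_const⟩ : Fin 1 →o Fin 2) =
        OrderHom.id := by
      ext t
      rw [Subsingleton.elim t 0]
      rfl
    rw [← X.map_id 0 y, ← X.map_id 0 z, ← hs, X.map_comp, X.map_comp,
      ← matrixForm_of_le ν y le_rfl, ← matrixForm_of_le ν z le_rfl, h]
  · exact eq_of_matrixForm_succ ν hX hm fun k => h _ _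

include hν

lemma map_eq_of_matrixForm_succ {m N : ℕ} (hm : 1 ≤ m) (α : Fin (m + 1) →o Fin (N + 1))
    (y : X.obj N) (z : X.obj m)
    (h : ∀ k : Fin m, matrixForm X ν y (α k.castSucc) (α k.succ) =
      matrixForm X ν z k.castSucc k.succ) :
    X.map α y = z :=
  eq_of_matrixForm_succ ν hX hm fun k => by rw [matrixForm_map ν hν]; exact h k

lemma matrixForm_eq_of_left_unit {N : ℕ} (y : X.obj N) {i k j : Fin (N + 1)} (hik : i ≤ k)
    (hkj : k ≤ j) (h : matrixForm X ν y i k = matrixForm X ν y k k) :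
    matrixForm X ν y i j = matrixForm X ν y k j := by
  have key : X.map (rho₃ i k j hik hkj) y = X.map (rho₃ k k j le_rfl hkj) y :=
    map_eq_of_matrixForm_succ ν hν hX (by norm_num) _ _ _ fun t => by
      fin_cases t
      · rw [matrixForm_map ν hν]; exact h
      · rw [matrixForm_map ν hν]; rfl
  have entry := congrArg (fun w => matrixForm X ν w 0 2) key
  simp only [matrixForm_map ν hν] at entry
  exact entry

lemma matrixForm_eq_of_right_unit {N : ℕ} (y : X.obj N) {i k j : Fin (N + 1)} (hik : i ≤ k)
    (hkj : k ≤ j) (h : matrixForm X ν y k j = matrixForm X ν y k k) :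
    matrixForm X ν y i j = matrixForm X ν y i k := by
  have key : X.map (rho₃ i k j hik hkj) y = X.map (rho₃ i k k hik le_rfl) y :=
    map_eq_of_matrixForm_succ ν hν hX (by norm_num) _ _ _ fun t => by
      fin_cases t
      · rw [matrixForm_map ν hν]; rfl
      · rw [matrixForm_map ν hν]; exact h
  have entry := congrArg (fun w => matrixForm X ν w 0 2) key
  simp only [matrixForm_map ν hν] at entry
  exact entry

end Edgy

def intervalIncl {N : ℕ} (s len : ℕ) (h : s + len ≤ N) : Fin (len + 1) →o Fin (N + 1) where
  toFun t := ⟨s + t.val, by have := t.isLt; omega⟩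
  monotone' a b hab := by
    have : a.val ≤ b.val := hab
    simp only [Fin.mk_le_mk]
    omega

@[simp]
lemma val_intervalIncl {N s len : ℕ} (h : s + len ≤ N) (t : Fin (len + 1)) :
    (intervalIncl s len h t).val = s + t.val :=
  rfl

@[simp]
lemma val_chi (n : ℕ) (i : Fin (n + n + 1)) : (chi n i).val = max n i.val - min n i.val :=
  rfl

namespace PartialGroupoidStruct

variable {X : SSet'} (P : PartialGroupoidStruct X)

lemma matrixForm_L_zero_last {n : ℕ} (hn : 1 ≤ n) (x : X.obj n) :
    matrixForm X P.inv (P.L x) 0 (Fin.last (n + n)) =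
      matrixForm X P.inv x (Fin.last n) (Fin.last n) := by
  rw [matrixForm_of_le _ _ (Fin.zero_le _), (P.L_spec hn x).2, matrixForm_of_le _ _ le_rfl]
  congr 1
  ext t
  fin_cases t <;> rfl

lemma matrixForm_L_of_val_eq_succ {n : ℕ} (hn : 1 ≤ n) (x : X.obj n) {i j : Fin (n + n + 1)}
    (hij : j.val = i.val + 1) :
    matrixForm X P.inv (P.L x) i j = matrixForm X P.inv x (chi n i) (chi n j) := by
  obtain ⟨k, rfl, rfl⟩ : ∃ k : Fin (n + n), k.castSucc = i ∧ k.succ = j :=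
    ⟨⟨i, by omega⟩, Fin.ext rfl, Fin.ext (by rw [Fin.val_succ, hij])⟩
  rw [← edge_eq_matrixForm, (P.L_spec hn x).1 k]
  split_ifs with hk
  · rw [edge_eq_matrixForm P.inv, app_one_matrixForm P.inv P.inv_zero]
    congr 1 <;> ext <;> simp only [val_chi, Fin.val_castSucc, Fin.val_succ] <;> omega
  · rw [edge_eq_matrixForm P.inv]
    congr 1 <;> ext <;> simp only [val_chi, Fin.val_castSucc, Fin.val_succ] <;> omega

lemma map_intervalIncl_L_front {n : ℕ} (hn : 1 ≤ n) (x : X.obj n) :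
    X.map (intervalIncl 0 n (by simp)) (P.L x) = P.inv.app n x :=
  map_eq_of_matrixForm_succ P.inv P.inv_zero P.edgy hn _ _ _ fun k => by
    rw [matrixForm_L_of_val_eq_succ P hn x rfl, matrixForm_app P.inv P.inv_zero]
    congr 1 <;> ext <;>
      simp only [val_chi, val_intervalIncl, Fin.val_castSucc, Fin.val_succ, Fin.val_rev] <;> omega

lemma map_intervalIncl_L_back {n : ℕ} (hn : 1 ≤ n) (x : X.obj n) :
    X.map (intervalIncl n n le_rfl) (P.L x) = x :=
  map_eq_of_matrixForm_succ P.inv P.inv_zero P.edgy hn _ _ _ fun k => by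
    rw [matrixForm_L_of_val_eq_succ P hn x rfl]
    congr 1 <;> ext <;>
      simp only [val_chi, val_intervalIncl, Fin.val_castSucc, Fin.val_succ] <;> omega

lemma matrixForm_L_of_le_of_le {n : ℕ} (hn : 1 ≤ n) (x : X.obj n) {i j : Fin (n + n + 1)}
    (hi : i.val ≤ n) (hj : j.val ≤ n) :
    matrixForm X P.inv (P.L x) i j = matrixForm X P.inv x (chi n i) (chi n j) := by
  have hincl := map_intervalIncl_L_front P hn x
  obtain ⟨i, rfl⟩ : ∃ i', intervalIncl 0 n (by simp) i' = i :=
    ⟨⟨i, by omega⟩, Fin.ext (Nat.zero_add _)⟩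
  obtain ⟨j, rfl⟩ : ∃ j', intervalIncl 0 n (by simp) j' = j :=
    ⟨⟨j, by omega⟩, Fin.ext (Nat.zero_add _)⟩
  rw [← matrixForm_map P.inv P.inv_zero, hincl, matrixForm_app P.inv P.inv_zero]
  congr 1 <;> ext <;> simp only [val_chi, val_intervalIncl, Fin.val_rev] <;> omega

lemma matrixForm_L_of_ge_of_ge {n : ℕ} (hn : 1 ≤ n) (x : X.obj n) {i j : Fin (n + n + 1)}
    (hi : n ≤ i.val) (hj : n ≤ j.val) :
    matrixForm X P.inv (P.L x) i j = matrixForm X P.inv x (chi n i) (chi n j) := by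
  have hincl := map_intervalIncl_L_back P hn x
  obtain ⟨i, rfl⟩ : ∃ i', intervalIncl n n le_rfl i' = i :=
    ⟨⟨i - n, by omega⟩, Fin.ext (by simp only [val_intervalIncl]; omega)⟩
  obtain ⟨j, rfl⟩ : ∃ j', intervalIncl n n le_rfl j' = j :=
    ⟨⟨j - n, by omega⟩, Fin.ext (by simp only [val_intervalIncl]; omega)⟩
  rw [← matrixForm_map P.inv P.inv_zero, hincl]
  congr 1 <;> ext <;> simp only [val_chi, val_intervalIncl] <;> omega

/-- On the interval `[n - a, n + a]`, `L x` agrees with `L` of the initial `a`-face of `x`, whose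
total composite is an identity. -/
lemma matrixForm_L_of_add_eq {n : ℕ} (hn : 1 ≤ n) (x : X.obj n) {i j : Fin (n + n + 1)}
    (hi : i.val ≤ n) (hij : i.val + j.val = n + n) :
    matrixForm X P.inv (P.L x) i j = matrixForm X P.inv x (chi n i) (chi n j) := by
  obtain ⟨a, ha⟩ : ∃ a, i.val + a = n := ⟨n - i.val, by omega⟩
  rcases Nat.eq_zero_or_pos a with rfl | ha1
  · exact matrixForm_L_of_le_of_le P hn x hi (by omega)
  have hrestrict : X.map (intervalIncl (n - a) (a + a) (by omega)) (P.L x) =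
      P.L (X.map (intervalIncl 0 a (by omega)) x) :=
    map_eq_of_matrixForm_succ P.inv P.inv_zero P.edgy (by omega) _ _ _ fun k => by
      rw [matrixForm_L_of_val_eq_succ P hn x rfl, matrixForm_L_of_val_eq_succ P ha1 _ rfl,
        matrixForm_map P.inv P.inv_zero]
      congr 1 <;> ext <;>
        simp only [val_chi, val_intervalIncl, Fin.val_castSucc, Fin.val_succ] <;> omega
  have entry := congrArg (fun w => matrixForm X P.inv w 0 (Fin.last _)) hrestrict
  simp only [matrixForm_map P.inv P.inv_zero, matrixForm_L_zero_last P ha1] at entry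
  convert entry using 2 <;> ext <;>
    simp only [val_chi, val_intervalIncl, Fin.val_zero, Fin.val_last] <;> omega

lemma matrixForm_L_of_lt_of_lt {n : ℕ} (hn : 1 ≤ n) (x : X.obj n) {i j : Fin (n + n + 1)}
    (hi : i.val < n) (hj : n < j.val) :
    matrixForm X P.inv (P.L x) i j = matrixForm X P.inv x (chi n i) (chi n j) := by
  have hjlt := j.isLt
  rcases le_total (n - i.val) (j.val - n) with hab | hba
  · -- the mirror image `k` of `i` has `χ k = χ i` and lies in the back face
    obtain ⟨k, hk⟩ : ∃ k : Fin (n + n + 1), k.val = n + n - i.val := ⟨⟨_, by omega⟩, rfl⟩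
    have hχ : chi n k = chi n i := Fin.ext (by simp only [val_chi]; omega)
    have hunit : matrixForm X P.inv (P.L x) i k = matrixForm X P.inv (P.L x) k k := by
      rw [matrixForm_L_of_add_eq P hn x hi.le (by omega),
        matrixForm_L_of_ge_of_ge P hn x (by omega) (by omega), hχ]
    rw [matrixForm_eq_of_left_unit P.inv P.inv_zero P.edgy _ (Fin.le_def.mpr (by omega))
        (Fin.le_def.mpr (by omega)) hunit,
      matrixForm_L_of_ge_of_ge P hn x (by omega) (by omega), hχ]
  · -- the mirror image `k` of `j` has `χ k = χ j` and lies in the front face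
    obtain ⟨k, hk⟩ : ∃ k : Fin (n + n + 1), k.val = n + n - j.val := ⟨⟨_, by omega⟩, rfl⟩
    have hχ : chi n k = chi n j := Fin.ext (by simp only [val_chi]; omega)
    have hunit : matrixForm X P.inv (P.L x) k j = matrixForm X P.inv (P.L x) k k := by
      rw [matrixForm_L_of_add_eq P hn x (by omega) (by omega),
        matrixForm_L_of_le_of_le P hn x (by omega) (by omega), hχ]
    rw [matrixForm_eq_of_right_unit P.inv P.inv_zero P.edgy _ (Fin.le_def.mpr (by omega))
        (Fin.le_def.mpr (by omega)) hunit,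
      matrixForm_L_of_le_of_le P hn x (by omega) (by omega), hχ]

lemma matrixForm_L {n : ℕ} (hn : 1 ≤ n) (x : X.obj n) (i j : Fin (n + n + 1)) :
    matrixForm X P.inv (P.L x) i j = matrixForm X P.inv x (chi n i) (chi n j) :=
  matrixForm_eq_of_forall_le P.inv P.inv_zero _ x (chi n) (fun i j hij => by
    have hij : i.val ≤ j.val := hij
    by_cases hj : j.val ≤ n
    · exact matrixForm_L_of_le_of_le P hn x (by omega) hj
    by_cases hi : n ≤ i.val
    · exact matrixForm_L_of_ge_of_ge P hn x hi (by omega)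
    exact matrixForm_L_of_lt_of_lt P hn x (by omega) (by omega)) i j

end PartialGroupoidStruct

section Pullback

variable {X : SSet'}

def HasMatrixPullback (ν : AntiInvolution X) {m n : ℕ} (φ : Fin (m + 1) → Fin (n + 1)) : Prop :=
  ∀ x : X.obj n, ∃ y : X.obj m, ∀ k l, matrixForm X ν y k l = matrixForm X ν x (φ k) (φ l)

lemma HasMatrixPullback.comp {ν : AntiInvolution X} {k m n : ℕ} {φ : Fin (k + 1) → Fin (m + 1)}
    {ψ : Fin (m + 1) → Fin (n + 1)} (hφ : HasMatrixPullback ν φ) (hψ : HasMatrixPullback ν ψ) :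
    HasMatrixPullback ν (ψ ∘ φ) := fun x => by
  obtain ⟨y, hy⟩ := hψ x
  obtain ⟨z, hz⟩ := hφ y
  exact ⟨z, fun a b => (hz a b).trans (hy _ _)⟩

lemma hasMatrixPullback_of_monotone {ν : AntiInvolution X} (hν : ∀ v : X.obj 0, ν.app 0 v = v)
    {m n : ℕ} {φ : Fin (m + 1) → Fin (n + 1)} (hφ : Monotone φ) : HasMatrixPullback ν φ :=
  fun x => ⟨X.map ⟨φ, hφ⟩ x, matrixForm_map ν hν ⟨φ, hφ⟩ x⟩

def prefixRev {m : ℕ} (j t : Fin (m + 1)) : Fin (m + 1) :=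
  if t.val ≤ j.val then ⟨j.val - t.val, by have := j.isLt; omega⟩ else t

lemma val_prefixRev {m : ℕ} (j t : Fin (m + 1)) :
    (prefixRev j t).val = if t.val ≤ j.val then j.val - t.val else t.val := by
  unfold prefixRev
  split_ifs <;> rfl

lemma swap_castSucc_succ_eq_prefixRev {m : ℕ} (k : Fin m) :
    ⇑(Equiv.swap k.castSucc k.succ) =
      prefixRev k.succ ∘ prefixRev ⟨1, by have := k.isLt; omega⟩ ∘ prefixRev k.succ := by
  funext t
  apply Fin.ext
  rw [Equiv.swap_apply_def]
  simp only [Function.comp, val_prefixRev, Fin.val_succ]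
  have := t.isLt
  split_ifs <;> simp only [Fin.ext_iff, Fin.val_succ, Fin.val_castSucc] at * <;> omega

end Pullback

namespace PartialGroupoidStruct

variable {X : SSet'} (P : PartialGroupoidStruct X)

lemma hasMatrixPullback_chi {n : ℕ} (hn : 1 ≤ n) : HasMatrixPullback P.inv (chi n) :=
  fun x => ⟨P.L x, P.matrixForm_L hn x⟩

/-- A prefix reversal of `[m]` is `χ_m` after an order-preserving map `[m] → [2m]`. -/
lemma hasMatrixPullback_prefixRev {m : ℕ} (hm : 1 ≤ m) (j : Fin (m + 1)) :
    HasMatrixPullback P.inv (prefixRev j) := by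
  let α : Fin (m + 1) → Fin (m + m + 1) := fun t =>
    ⟨if t ≤ j then m - j.val + t.val else m + t.val, by
      have := j.isLt; have := t.isLt; split_ifs <;> omega⟩
  have hα : Monotone α := by
    intro a b hab
    have : a.val ≤ b.val := hab
    simp only [α, Fin.le_def]
    split_ifs <;> omega
  convert (hasMatrixPullback_of_monotone P.inv_zero hα).comp (P.hasMatrixPullback_chi hm) using 1
  funext t
  ext
  simp only [Function.comp, val_prefixRev, α, chi]
  split_ifs <;> omega

lemma hasMatrixPullback_perm {m : ℕ} (σ : Equiv.Perm (Fin (m + 1))) :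
    HasMatrixPullback P.inv σ := by
  have hσ : σ ∈ Submonoid.closure (Set.range fun k : Fin m => Equiv.swap k.castSucc k.succ) := by
    rw [Equiv.Perm.mclosure_swap_castSucc_succ]
    trivial
  induction hσ using Submonoid.closure_induction with
  | mem _ h =>
    obtain ⟨k, rfl⟩ := h
    have hm : 1 ≤ m := by have := k.isLt; omega
    rw [swap_castSucc_succ_eq_prefixRev]
    exact ((P.hasMatrixPullback_prefixRev hm _).comp (P.hasMatrixPullback_prefixRev hm _)).comp
      (P.hasMatrixPullback_prefixRev hm _)
  | one => exact hasMatrixPullback_of_monotone P.inv_zero monotone_id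
  | mul σ τ _ _ hσ hτ => exact hτ.comp hσ

/-- Every map is an order-preserving map after a permutation. -/
lemma hasMatrixPullback {m n : ℕ} (φ : Fin (m + 1) → Fin (n + 1)) : HasMatrixPullback P.inv φ := by
  convert (P.hasMatrixPullback_perm (Tuple.sort φ)⁻¹).comp
    (hasMatrixPullback_of_monotone P.inv_zero (Tuple.monotone_sort φ)) using 1
  funext t
  simp

noncomputable def pullback {m n : ℕ} (φ : Fin (m + 1) → Fin (n + 1)) (x : X.obj n) : X.obj m :=
  (P.hasMatrixPullback φ x).choose

lemma matrixForm_pullback {m n : ℕ} (φ : Fin (m + 1) → Fin (n + 1)) (x : X.obj n)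
    (k l : Fin (m + 1)) :
    matrixForm X P.inv (P.pullback φ x) k l = matrixForm X P.inv x (φ k) (φ l) :=
  (P.hasMatrixPullback φ x).choose_spec k l

lemma eq_pullback {m n : ℕ} {φ : Fin (m + 1) → Fin (n + 1)} {x : X.obj n} {y : X.obj m}
    (h : ∀ k l, matrixForm X P.inv y k l = matrixForm X P.inv x (φ k) (φ l)) :
    y = P.pullback φ x :=
  eq_of_matrixForm P.inv P.edgy fun k l => (h k l).trans (P.matrixForm_pullback φ x k l).symm

end PartialGroupoidStruct

/-- Let `X` be a partial groupoid.  For each `x ∈ X_n` with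
matrix form `(x_{ij})` and each arbitrary function `φ : [m] → [n]`, there is a
unique element `φ^* x ∈ X_m` with matrix form `(x_{φ(k),φ(ℓ)})`; these
assignments define a symmetric set extending `X`, i.e. an action `F` of all
functions which is functorial, restricts to the given action of the
order-preserving maps, and acts on matrix forms by `(x_{ij}) ↦ (x_{φ(k),φ(ℓ)})`. -/
theorem unique_symmetric_extension (X : SSet') (P : PartialGroupoidStruct X) :
    (∀ (m n : ℕ) (φ : Fin (m + 1) → Fin (n + 1)) (x : X.obj n),
      ∃! y : X.obj m, ∀ k l : Fin (m + 1),
        matrixForm X P.inv y k l = matrixForm X P.inv x (φ k) (φ l)) ∧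
    ∃ F : ∀ (m n : ℕ), (Fin (m + 1) → Fin (n + 1)) → X.obj n → X.obj m,
      (∀ (n : ℕ) (x : X.obj n), F n n id x = x) ∧
      (∀ (k m n : ℕ) (φ : Fin (k + 1) → Fin (m + 1)) (ψ : Fin (m + 1) → Fin (n + 1))
        (x : X.obj n), F k n (ψ ∘ φ) x = F k m φ (F m n ψ x)) ∧
      (∀ (m n : ℕ) (α : Fin (m + 1) →o Fin (n + 1)) (x : X.obj n),
        F m n (⇑α) x = X.map α x) ∧
      (∀ (m n : ℕ) (φ : Fin (m + 1) → Fin (n + 1)) (x : X.obj n) (k l : Fin (m + 1)),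
        matrixForm X P.inv (F m n φ x) k l = matrixForm X P.inv x (φ k) (φ l)) := by
  refine ⟨fun m n φ x => ⟨P.pullback φ x, P.matrixForm_pullback φ x, fun y => P.eq_pullback⟩,
    fun m n => P.pullback, fun n x => ?_, fun k m n φ ψ x => ?_, fun m n α x => ?_,
    fun _ _ => P.matrixForm_pullback⟩
  · exact (P.eq_pullback fun k l => rfl).symm
  · refine (P.eq_pullback fun a b => ?_).symm
    rw [P.matrixForm_pullback, P.matrixForm_pullback]
    rfl
  · exact (P.eq_pullback (matrixForm_map P.inv P.inv_zero α x)).symm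
end

section
/- The restriction functor J^* from symmetric sets to simplicial sets is fully faithful on the full subcategory of spiny symmetric sets: if Y and Z are spiny symmetric sets, then every map of simplicial sets F : J^*Y → J^*Z equals J^*G for a unique map of symmetric sets G : Y → Z. -/
/-- A symmetric (simplicial) set: a contravariant functor on the category `Υ`
of the sets `[n]` and arbitrary functions. -/
structure SymSet where
  obj : ℕ → Type
  map : ∀ {m n : ℕ}, (Fin (m + 1) → Fin (n + 1)) → obj n → obj m
  map_id : ∀ (n : ℕ) (x : obj n), map id x = x
  map_comp : ∀ {k m n : ℕ} (φ : Fin (k + 1) → Fin (m + 1)) (ψ : Fin (m + 1) → Fin (n + 1))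
      (x : obj n), map (ψ ∘ φ) x = map φ (map ψ x)

/-- Restriction `J^*` of a symmetric set along the inclusion `J : Δ → Υ`. -/
def SymSet.restrict (Z : SymSet) : SSet' where
  obj := Z.obj
  map α x := Z.map (⇑α) x
  map_id n x := Z.map_id n x
  map_comp α β x := Z.map_comp (⇑α) (⇑β) x

/-- A map of symmetric sets. -/
structure SymSetHom (Y Z : SymSet) where
  app : ∀ n : ℕ, Y.obj n → Z.obj n
  naturality : ∀ {m n : ℕ} (φ : Fin (m + 1) → Fin (n + 1)) (x : Y.obj n),
    app m (Y.map φ x) = Z.map φ (app n x)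

/-- The identity map of symmetric sets. -/
def SymSetHom.id (X : SymSet) : SymSetHom X X where
  app _ x := x
  naturality _ _ := rfl

/-- Composition of maps of symmetric sets. -/
def SymSetHom.comp {X Y Z : SymSet} (G : SymSetHom Y Z) (F : SymSetHom X Y) : SymSetHom X Z where
  app n x := G.app n (F.app n x)
  naturality φ x := by rw [F.naturality, G.naturality]

/-- Restriction `J^*` of a map of symmetric sets. -/
def SymSetHom.restrict {Y Z : SymSet} (G : SymSetHom Y Z) : SSetHom Y.restrict Z.restrict where
  app := G.app
  naturality α x := G.naturality (⇑α) x

/-! In a spiny symmetric set a 2-simplex whose long edge is degenerate exhibits its second edge as the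
reverse of its first; applied to the image of the degenerate 2-simplex `(0,1,0)^* e` this forces a
simplicial map to commute with edge reversal. A map commuting with all reversals commutes with every
`ρ_{ab}`, and since every simplex of the target is determined by its edges `ρ_{k,k+1}^*`, it then
commutes with every function `[m] → [n]`. -/

lemma comp_vecCons_pair {α β : Type*} (f : α → β) (a b : α) : f ∘ ![a, b] = ![f a, f b] := by
  funext i
  fin_cases i <;> rfl

lemma monotone_vecCons_pair {n : ℕ} {a b : Fin (n + 1)} (h : a ≤ b) : Monotone ![a, b] :=
  (rho a b h).monotone'

namespace SymSet

variable (X : SymSet)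

lemma map_map {k m n : ℕ} (φ : Fin (k + 1) → Fin (m + 1)) (ψ : Fin (m + 1) → Fin (n + 1))
    (x : X.obj n) : X.map φ (X.map ψ x) = X.map (ψ ∘ φ) x :=
  (X.map_comp φ ψ x).symm

lemma edge_restrict {n : ℕ} (x : X.obj n) (k : Fin n) :
    X.restrict.edge x k = X.map ![k.castSucc, k.succ] x := rfl

lemma edge_restrict_map {m n : ℕ} (φ : Fin (m + 1) → Fin (n + 1)) (x : X.obj n) (k : Fin m) :
    X.restrict.edge (X.map φ x) k = X.map ![φ k.castSucc, φ k.succ] x := by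
  rw [edge_restrict, map_map, comp_vecCons_pair]

lemma map_one_two_eq_map_one_zero_of_isEdgy (hX : X.restrict.IsEdgy) (u : X.obj 2)
    (h : X.map ![0, 2] u = X.map ![0, 0] u) :
    X.map ![1, 2] u = X.map ![1, 0] u := by
  have h_rev : X.map ![2, 0] u = X.map ![0, 2] u := by
    calc X.map ![2, 0] u = X.map ![1, 0] (X.map ![0, 2] u) := by rw [map_map]; congr 1; decide
      _ = X.map ![1, 0] (X.map ![0, 0] u) := by rw [h]
      _ = X.map ![0, 2] u := by rw [map_map, h]; congr 1; decide
  -- the 3-simplices `(1,0,2,0)^* u` and `(1,0,0,2)^* u` have the same spine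
  have h_spine : X.map ![1, 0, 2, 0] u = X.map ![1, 0, 0, 2] u := by
    refine hX 3 (by norm_num) (funext fun k => ?_)
    change X.restrict.edge (X.map ![1, 0, 2, 0] u) k = X.restrict.edge (X.map ![1, 0, 0, 2] u) k
    rw [edge_restrict_map, edge_restrict_map]
    fin_cases k
    · rfl
    · exact h
    · exact h_rev
  have h_face := congrArg (X.map ![0, 2]) h_spine
  rw [map_map, map_map] at h_face
  convert h_face using 2 <;> decide

end SymSet

namespace SSetHom

variable {Y Z : SymSet} (F : SSetHom Y.restrict Z.restrict)

lemma app_map_of_monotone {m n : ℕ} {f : Fin (m + 1) → Fin (n + 1)} (hf : Monotone f)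
    (x : Y.obj n) : F.app m (Y.map f x) = Z.map f (F.app n x) :=
  F.naturality ⟨f, hf⟩ x

lemma app_map_rev_edge (hZ : Z.restrict.IsEdgy) (e : Y.obj 1) :
    F.app 1 (Y.map ![1, 0] e) = Z.map ![1, 0] (F.app 1 e) := by
  set A : Z.obj 2 := F.app 2 (Y.map ![0, 1, 0] e) with hA
  have h_long : Z.map ![0, 2] A = Z.map ![0, 0] A := by
    rw [hA, ← F.app_map_of_monotone (monotone_vecCons_pair (by decide)),
      ← F.app_map_of_monotone (monotone_vecCons_pair (by decide)), Y.map_map, Y.map_map]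
    congr 2
    decide
  have h_second : Z.map ![1, 2] A = F.app 1 (Y.map ![1, 0] e) := by
    rw [hA, ← F.app_map_of_monotone (monotone_vecCons_pair (by decide)), Y.map_map]
    congr 2
    decide
  have h_first : Z.map ![0, 1] A = F.app 1 e := by
    rw [hA, ← F.app_map_of_monotone (monotone_vecCons_pair (by decide)), Y.map_map]
    have h_id : (![0, 1, 0] : Fin 3 → Fin 2) ∘ ![0, 1] = id := by decide
    rw [h_id, Y.map_id]
  have h_rev_first : Z.map ![1, 0] A = Z.map ![1, 0] (F.app 1 e) := by
    rw [← h_first, Z.map_map]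
    congr 1
    decide
  rw [← h_second, ← h_rev_first]
  exact Z.map_one_two_eq_map_one_zero_of_isEdgy hZ A h_long

lemma app_map_pair (hZ : Z.restrict.IsEdgy) {n : ℕ} (a b : Fin (n + 1)) (x : Y.obj n) :
    F.app 1 (Y.map ![a, b] x) = Z.map ![a, b] (F.app n x) := by
  rcases le_total a b with h | h
  · exact F.app_map_of_monotone (monotone_vecCons_pair h) x
  · have h_flip : (![a, b] : Fin 2 → Fin (n + 1)) = ![b, a] ∘ ![1, 0] := by
      rw [comp_vecCons_pair]
      rfl
    rw [h_flip, ← Y.map_map, F.app_map_rev_edge hZ,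
      F.app_map_of_monotone (monotone_vecCons_pair h)]
    exact Z.map_map _ _ _

lemma app_map (hZ : Z.restrict.IsEdgy) {m n : ℕ} (φ : Fin (m + 1) → Fin (n + 1)) (x : Y.obj n) :
    F.app m (Y.map φ x) = Z.map φ (F.app n x) := by
  rcases Nat.eq_zero_or_pos m with rfl | hm
  · exact F.app_map_of_monotone (fun a b _ => by rw [Fin.eq_zero a, Fin.eq_zero b]) x
  · refine hZ m hm (funext fun k => ?_)
    change Z.map ![k.castSucc, k.succ] (F.app m (Y.map φ x)) =
      Z.map ![k.castSucc, k.succ] (Z.map φ (F.app n x))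
    rw [← F.app_map_of_monotone (monotone_vecCons_pair (Fin.castSucc_lt_succ (i := k)).le),
      Y.map_map, comp_vecCons_pair, F.app_map_pair hZ, ← comp_vecCons_pair]
    exact (Z.map_map _ _ _).symm

def toSymSetHom (hZ : Z.restrict.IsEdgy) : SymSetHom Y Z where
  app := F.app
  naturality := F.app_map hZ

end SSetHom

lemma SymSetHom.restrict_injective {Y Z : SymSet} :
    Function.Injective (SymSetHom.restrict : SymSetHom Y Z → _) := by
  rintro ⟨G, _⟩ ⟨G', _⟩ h
  cases congrArg SSetHom.app h
  rfl

theorem restrict_fully_faithful_general (Y Z : SymSet)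
    (hZ : Z.restrict.IsEdgy) (F : SSetHom Y.restrict Z.restrict) :
    ∃! G : SymSetHom Y Z, G.restrict = F :=
  ⟨F.toSymSetHom hZ, rfl, fun _ hG => SymSetHom.restrict_injective (hG.trans rfl)⟩

/-- The restriction functor `J^*` is fully faithful on spiny
symmetric sets (those whose underlying simplicial set is edgy): every map of
simplicial sets `F : J^*Y → J^*Z` equals `J^*G` for a unique map of symmetric
sets `G : Y → Z`. -/
theorem restrict_fully_faithful (Y Z : SymSet) (hY : Y.restrict.IsEdgy)
    (hZ : Z.restrict.IsEdgy) (F : SSetHom Y.restrict Z.restrict) :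
    ∃! G : SymSetHom Y Z, G.restrict = F :=
  restrict_fully_faithful_general Y Z hZ F
end
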